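/- (Algebraic form of the sign theorem.) Identify ℝ³ with the pure imaginary quaternions. Let N ≥ 1, let a₀,…,a_N be distinct pure imaginary quaternions, λ₀,…,λ_N > 0, μ > 0. Let f(x) = Σᵢ λᵢ² log‖x − aᵢ‖, ζ = ∇f, and let ι̃ : ℝ³ ∖ {a₀,…,a_N} → ℝ³ send x to the imaginary part of Ψ(μ)(x)·conj(ζ(x)) (regarded as a vector in ℝ³), where Ψ(μ)(x) = Σᵢ,ⱼ λᵢ²λⱼ² (x − aᵢ + μ)·conj(x − aⱼ + μ)·(x − aⱼ)/(‖x − aᵢ + μ‖²‖x − aⱼ + μ‖²‖x − aⱼ‖²). If x* is a non-degenerate critical point of f (i.e. ζ(x*) = 0 and det Hf(x*) ≠ 0), then the sign of the determinant of the total derivative of ι̃ at x* equals minus the sign of det(Hf(x*)); in particular the derivative of ι̃ at x* is invertible. -/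

import Mathlib

/-!
At a zero `x⁎` of `ζ`, the product rule gives `dι̃(x⁎) = Im(Ψ(x⁎) · conj(dζ(x⁎)))`: the term
carrying `ζ(x⁎)` drops out, and `conj = -id` on the pure imaginary values of `ζ`. The point is
that `Ψ(x⁎)` is a positive real `c`. Indeed `Ψ = L · R` with
`L = Σᵢ λᵢ² (x − aᵢ + μ)/‖x − aᵢ + μ‖²`, and the identity
`μ conj(u + μ) u / (‖u + μ‖²‖u‖²) = conj(u + μ)/‖u + μ‖² + u/‖u‖²` for pure imaginary `u ≠ 0`
sums to `μ R = conj L + ζ`. So `Ψ(x⁎) = L conj L / μ = ‖L‖²/μ`, and `L ≠ 0` because `Re L > 0`.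
Hence `dι̃(x⁎) = -c · Hf(x⁎)`, whose determinant is `-c³ det Hf(x⁎)` in dimension three.
-/

/-- The pure imaginary quaternion corresponding to a vector in `ℝ³`. -/
def quatOfVec (y : Fin 3 → ℝ) : Quaternion ℝ := ⟨0, y 0, y 1, y 2⟩

/-- The vector in `ℝ³` formed by the imaginary part of a quaternion. -/
def imVec (q : Quaternion ℝ) : Fin 3 → ℝ := ![q.imI, q.imJ, q.imK]

/-- The JNR function `ζ(x) = Σᵢ λᵢ² (x − aᵢ)/‖x − aᵢ‖²` (the gradient of
`f(x) = Σᵢ λᵢ² log‖x − aᵢ‖`), quaternion-valued. -/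
noncomputable def jnrZeta (N : ℕ) (a : Fin (N + 1) → Quaternion ℝ)
    (lam : Fin (N + 1) → ℝ) (x : Quaternion ℝ) : Quaternion ℝ :=
  ∑ i, ((lam i) ^ 2 / ‖x - a i‖ ^ 2) • (x - a i)

/-- `ζ = ∇f` as a map `ℝ³ → ℝ³` on pure imaginary quaternions; its derivative is the
Hessian `Hf` of `f`. -/
noncomputable def jnrZetaVec (N : ℕ) (a : Fin (N + 1) → Quaternion ℝ)
    (lam : Fin (N + 1) → ℝ) (y : Fin 3 → ℝ) : Fin 3 → ℝ :=
  imVec (jnrZeta N a lam (quatOfVec y))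

/-- `Ψ(μ)(x) = Σᵢⱼ λᵢ²λⱼ² (x − aᵢ + μ)·conj(x − aⱼ + μ)·(x − aⱼ)
/(‖x − aᵢ + μ‖²‖x − aⱼ + μ‖²‖x − aⱼ‖²)`, with quaternion products. -/
noncomputable def jnrPsi (N : ℕ) (a : Fin (N + 1) → Quaternion ℝ)
    (lam : Fin (N + 1) → ℝ) (μ : ℝ) (x : Quaternion ℝ) : Quaternion ℝ :=
  ∑ i, ∑ j,
    ((lam i) ^ 2 * (lam j) ^ 2 /
        (‖x - a i + (μ : Quaternion ℝ)‖ ^ 2 * ‖x - a j + (μ : Quaternion ℝ)‖ ^ 2 *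
          ‖x - a j‖ ^ 2)) •
      ((x - a i + (μ : Quaternion ℝ)) * star (x - a j + (μ : Quaternion ℝ)) * (x - a j))

/-- `ι̃ : ℝ³ → ℝ³`, `x ↦ Im(Ψ(μ)(x)·conj(ζ(x)))` regarded as a vector in `ℝ³`. -/
noncomputable def jnrIota (N : ℕ) (a : Fin (N + 1) → Quaternion ℝ)
    (lam : Fin (N + 1) → ℝ) (μ : ℝ) (y : Fin 3 → ℝ) : Fin 3 → ℝ :=
  imVec (jnrPsi N a lam μ (quatOfVec y) * star (jnrZeta N a lam (quatOfVec y)))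

/-- The Hessian `Hf` of `f(x) = Σᵢ λᵢ² log‖x − aᵢ‖`, i.e. the derivative of `ζ = ∇f`. -/
noncomputable def jnrHess (N : ℕ) (a : Fin (N + 1) → Quaternion ℝ)
    (lam : Fin (N + 1) → ℝ) (y : Fin 3 → ℝ) : (Fin 3 → ℝ) →L[ℝ] (Fin 3 → ℝ) :=
  fderiv ℝ (jnrZetaVec N a lam) y

open Finset
open scoped Quaternion

instance : StarModule ℝ ℍ[ℝ] := ⟨Quaternion.star_smul⟩

/-- `DifferentiableAt.norm_sq` takes its scalar field explicitly, which `fun_prop` cannot supply. -/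
@[fun_prop]
theorem DifferentiableAt.norm_sq_real {E F : Type*} [NormedAddCommGroup E]
    [InnerProductSpace ℝ E] [NormedAddCommGroup F] [NormedSpace ℝ F] {f : F → E} {x : F}
    (hf : DifferentiableAt ℝ f x) : DifferentiableAt ℝ (fun y => ‖f y‖ ^ 2) x :=
  hf.norm_sq ℝ

theorem Real.sign_mul_of_pos {c : ℝ} (hc : 0 < c) (d : ℝ) : Real.sign (c * d) = Real.sign d := by
  rcases lt_trichotomy d 0 with hd | rfl | hd
  · rw [Real.sign_of_neg (mul_neg_of_pos_of_neg hc hd), Real.sign_of_neg hd]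
  · rw [mul_zero]
  · rw [Real.sign_of_pos (mul_pos hc hd), Real.sign_of_pos hd]

section OddDimension

variable {V : Type*} [AddCommGroup V] [Module ℝ V] [FiniteDimensional ℝ V]

theorem LinearMap.det_neg_smul_of_odd (hV : Odd (Module.finrank ℝ V)) (c : ℝ) (f : V →ₗ[ℝ] V) :
    LinearMap.det ((-c) • f) = -(c ^ Module.finrank ℝ V * LinearMap.det f) := by
  rw [LinearMap.det_smul, hV.neg_pow, neg_mul]

theorem LinearMap.sign_det_neg_smul_of_odd (hV : Odd (Module.finrank ℝ V)) {c : ℝ} (hc : 0 < c)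
    (f : V →ₗ[ℝ] V) : Real.sign (LinearMap.det ((-c) • f)) = -Real.sign (LinearMap.det f) := by
  rw [LinearMap.det_neg_smul_of_odd hV, Real.sign_neg, Real.sign_mul_of_pos (pow_pos hc _)]

theorem LinearMap.det_neg_smul_ne_zero_of_odd (hV : Odd (Module.finrank ℝ V)) {c : ℝ}
    (hc : c ≠ 0) {f : V →ₗ[ℝ] V} (hf : LinearMap.det f ≠ 0) :
    LinearMap.det ((-c) • f) ≠ 0 := by
  rw [LinearMap.det_neg_smul_of_odd hV, neg_ne_zero]
  exact mul_ne_zero (pow_ne_zero _ hc) hf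

end OddDimension

namespace Quaternion

theorem re_sum {ι : Type*} (s : Finset ι) (f : ι → ℍ[ℝ]) :
    (∑ i ∈ s, f i).re = ∑ i ∈ s, (f i).re :=
  map_sum (QuaternionAlgebra.reₗ (-1 : ℝ) 0 (-1)) f s

theorem mul_self_of_re_eq_zero {u : ℍ[ℝ]} (hu : u.re = 0) :
    u * u = -((‖u‖ ^ 2 : ℝ) : ℍ[ℝ]) := by
  rw [← sq, sq_eq_neg_normSq.mpr hu, sq, normSq_eq_norm_mul_self]

theorem sq_norm_add_coe_of_re_eq_zero {u : ℍ[ℝ]} (hu : u.re = 0) (μ : ℝ) :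
    ‖u + (μ : ℍ[ℝ])‖ ^ 2 = ‖u‖ ^ 2 + μ ^ 2 := by
  simp only [sq, ← normSq_eq_norm_mul_self, normSq_add, normSq_coe, star_coe, mul_coe_eq_smul,
    re_smul, hu, smul_zero, mul_zero, add_zero]

theorem smul_star_add_coe_mul_eq {u : ℍ[ℝ]} (hu : u.re = 0) (hu0 : u ≠ 0) (μ r : ℝ) :
    μ • ((r / (‖u + (μ : ℍ[ℝ])‖ ^ 2 * ‖u‖ ^ 2)) • (star (u + (μ : ℍ[ℝ])) * u)) =
      (r / ‖u + (μ : ℍ[ℝ])‖ ^ 2) • star (u + (μ : ℍ[ℝ])) + (r / ‖u‖ ^ 2) • u := by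
  have hu2 : ‖u‖ ^ 2 ≠ 0 := by positivity
  have hstar : star (u + (μ : ℍ[ℝ])) = μ • (1 : ℍ[ℝ]) - u := by
    rw [star_add, star_eq_neg.mpr hu, star_coe, ← algebraMap_def, Algebra.algebraMap_eq_smul_one,
      neg_add_eq_sub]
  have hmul : star (u + (μ : ℍ[ℝ])) * u = μ • u + ‖u‖ ^ 2 • (1 : ℍ[ℝ]) := by
    rw [hstar, sub_mul, mul_self_of_re_eq_zero hu, smul_mul_assoc, one_mul, sub_neg_eq_add,
      ← algebraMap_def, Algebra.algebraMap_eq_smul_one]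
  rw [sq_norm_add_coe_of_re_eq_zero hu, hmul, hstar]
  match_scalars <;> field_simp
  ring

end Quaternion

@[simp] theorem re_quatOfVec (y : Fin 3 → ℝ) : (quatOfVec y).re = 0 := rfl

@[simp] theorem imI_quatOfVec (y : Fin 3 → ℝ) : (quatOfVec y).imI = y 0 := rfl

@[simp] theorem imJ_quatOfVec (y : Fin 3 → ℝ) : (quatOfVec y).imJ = y 1 := rfl

@[simp] theorem imK_quatOfVec (y : Fin 3 → ℝ) : (quatOfVec y).imK = y 2 := rfl

noncomputable def quatOfVecL : (Fin 3 → ℝ) →L[ℝ] ℍ[ℝ] :=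
  LinearMap.toContinuousLinearMap
    { toFun := quatOfVec
      map_add' := fun y z => by ext <;> simp
      map_smul' := fun c y => by ext <;> simp }

noncomputable def imVecL : ℍ[ℝ] →L[ℝ] (Fin 3 → ℝ) :=
  LinearMap.toContinuousLinearMap
    { toFun := imVec
      map_add' := fun p q => by ext i; fin_cases i <;> simp [imVec]
      map_smul' := fun c q => by ext i; fin_cases i <;> simp [imVec] }

@[simp] theorem quatOfVecL_apply (y : Fin 3 → ℝ) : quatOfVecL y = quatOfVec y := rfl

@[simp] theorem imVecL_apply (q : ℍ[ℝ]) : imVecL q = imVec q := rfl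

@[simp] theorem imVec_smul (r : ℝ) (q : ℍ[ℝ]) : imVec (r • q) = r • imVec q :=
  map_smul imVecL r q

@[simp] theorem imVec_quatOfVec (y : Fin 3 → ℝ) : imVec (quatOfVec y) = y := by
  ext i; fin_cases i <;> rfl

theorem quatOfVec_imVec {q : ℍ[ℝ]} (hq : q.re = 0) : quatOfVec (imVec q) = q := by
  ext <;> simp [quatOfVec, imVec, hq]

section JNR

variable {N : ℕ} {a : Fin (N + 1) → ℍ[ℝ]} {lam : Fin (N + 1) → ℝ} {μ : ℝ} {x : ℍ[ℝ]}

variable (N a lam μ) in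
noncomputable def jnrPsiLeft (x : ℍ[ℝ]) : ℍ[ℝ] :=
  ∑ i, ((lam i) ^ 2 / ‖x - a i + (μ : ℍ[ℝ])‖ ^ 2) • (x - a i + (μ : ℍ[ℝ]))

variable (N a lam μ) in
noncomputable def jnrPsiRight (x : ℍ[ℝ]) : ℍ[ℝ] :=
  ∑ j, ((lam j) ^ 2 / (‖x - a j + (μ : ℍ[ℝ])‖ ^ 2 * ‖x - a j‖ ^ 2)) •
    (star (x - a j + (μ : ℍ[ℝ])) * (x - a j))

variable (N a lam μ) in
theorem jnrPsi_eq_mul (x : ℍ[ℝ]) :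
    jnrPsi N a lam μ x = jnrPsiLeft N a lam μ x * jnrPsiRight N a lam μ x := by
  rw [jnrPsi, jnrPsiLeft, jnrPsiRight, sum_mul_sum]
  refine sum_congr rfl fun i _ => sum_congr rfl fun j _ => ?_
  rw [smul_mul_smul_comm, ← mul_assoc]
  congr 1
  ring

theorem smul_jnrPsiRight (ha_im : ∀ i, (a i).re = 0) (hx : x.re = 0) (hxa : ∀ i, x ≠ a i) :
    μ • jnrPsiRight N a lam μ x = star (jnrPsiLeft N a lam μ x) + jnrZeta N a lam x := by
  have hre (i : Fin (N + 1)) : (x - a i).re = 0 := by simp [hx, ha_im i]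
  simp only [jnrPsiRight, jnrPsiLeft, jnrZeta, smul_sum, star_sum, star_smul, star_trivial,
    Quaternion.smul_star_add_coe_mul_eq (hre _) (sub_ne_zero.mpr (hxa _)), sum_add_distrib]

theorem re_jnrPsiLeft_pos (ha_im : ∀ i, (a i).re = 0) (hx : x.re = 0) (hlam : ∀ i, lam i ≠ 0)
    (hμ : 0 < μ) : 0 < (jnrPsiLeft N a lam μ x).re := by
  rw [jnrPsiLeft, Quaternion.re_sum]
  refine sum_pos (fun i _ => ?_) univ_nonempty
  have hre : (x - a i).re = 0 := by simp [hx, ha_im i]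
  simp only [Quaternion.re_smul, Quaternion.re_add, hre, Quaternion.re_coe, zero_add, smul_eq_mul,
    Quaternion.sq_norm_add_coe_of_re_eq_zero hre]
  have := hlam i
  positivity

theorem jnrPsi_eq_of_jnrZeta_eq_zero (ha_im : ∀ i, (a i).re = 0) (hx : x.re = 0)
    (hxa : ∀ i, x ≠ a i) (hμ : μ ≠ 0) (hzero : jnrZeta N a lam x = 0) :
    jnrPsi N a lam μ x = ((‖jnrPsiLeft N a lam μ x‖ ^ 2 / μ : ℝ) : ℍ[ℝ]) := by
  have hright : jnrPsiRight N a lam μ x = μ⁻¹ • star (jnrPsiLeft N a lam μ x) := by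
    have h := smul_jnrPsiRight (μ := μ) (lam := lam) ha_im hx hxa
    rw [hzero, add_zero] at h
    rw [← h, inv_smul_smul₀ hμ]
  rw [jnrPsi_eq_mul, hright, mul_smul_comm, Quaternion.self_mul_star, Quaternion.smul_coe, sq,
    ← Quaternion.normSq_eq_norm_mul_self, inv_mul_eq_div]

theorem re_jnrZeta (ha_im : ∀ i, (a i).re = 0) (hx : x.re = 0) : (jnrZeta N a lam x).re = 0 := by
  simp [jnrZeta, Quaternion.re_sum, hx, ha_im]

theorem differentiableAt_jnrZeta (hxa : ∀ i, x ≠ a i) :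
    DifferentiableAt ℝ (jnrZeta N a lam) x := by
  unfold jnrZeta
  fun_prop (disch := simp [sub_eq_zero, hxa])

theorem differentiableAt_jnrPsi (hxa : ∀ i, x ≠ a i) (hxμ : ∀ i, x - a i + (μ : ℍ[ℝ]) ≠ 0) :
    DifferentiableAt ℝ (jnrPsi N a lam μ) x := by
  unfold jnrPsi
  fun_prop (disch := simp [sub_eq_zero, hxa, hxμ])

variable {xs : Fin 3 → ℝ}

theorem hasFDerivAt_jnrZeta_quatOfVec (ha_im : ∀ i, (a i).re = 0)
    (hxs : ∀ i, quatOfVec xs ≠ a i) :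
    HasFDerivAt (fun y => jnrZeta N a lam (quatOfVec y))
      (quatOfVecL.comp (jnrHess N a lam xs)) xs := by
  have hZ : DifferentiableAt ℝ (jnrZetaVec N a lam) xs :=
    imVecL.differentiableAt.comp xs
      ((differentiableAt_jnrZeta hxs).comp xs quatOfVecL.differentiableAt)
  have hpure : (fun y => jnrZeta N a lam (quatOfVec y)) =
      fun y => quatOfVecL (jnrZetaVec N a lam y) := by
    ext1 y
    exact (quatOfVec_imVec (re_jnrZeta ha_im (re_quatOfVec y))).symm
  rw [hpure]
  exact quatOfVecL.hasFDerivAt.comp xs hZ.hasFDerivAt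

theorem jnrIota_eq_neg (ha_im : ∀ i, (a i).re = 0) :
    jnrIota N a lam μ =
      fun y => -imVecL (jnrPsi N a lam μ (quatOfVec y) * jnrZeta N a lam (quatOfVec y)) := by
  ext1 y
  rw [jnrIota, Quaternion.star_eq_neg.mpr (re_jnrZeta ha_im (re_quatOfVec y)), mul_neg,
    ← imVecL_apply, map_neg]

theorem hasFDerivAt_jnrIota (ha_im : ∀ i, (a i).re = 0) (hxs : ∀ i, quatOfVec xs ≠ a i)
    (hμ : μ ≠ 0) (hzero : jnrZeta N a lam (quatOfVec xs) = 0) {c : ℝ}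
    (hc : jnrPsi N a lam μ (quatOfVec xs) = c) :
    HasFDerivAt (jnrIota N a lam μ) ((-c) • jnrHess N a lam xs) xs := by
  have hxμ (i : Fin (N + 1)) : quatOfVec xs - a i + (μ : ℍ[ℝ]) ≠ 0 := fun h => by
    simpa [ha_im i, hμ] using congrArg QuaternionAlgebra.re h
  have hP : DifferentiableAt ℝ (fun y => jnrPsi N a lam μ (quatOfVec y)) xs :=
    (differentiableAt_jnrPsi hxs hxμ).comp xs quatOfVecL.differentiableAt
  have hprod := hP.hasFDerivAt.mul' (hasFDerivAt_jnrZeta_quatOfVec (lam := lam) ha_im hxs)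
  rw [jnrIota_eq_neg ha_im]
  refine (imVecL.hasFDerivAt.comp xs hprod).neg.congr_fderiv ?_
  ext1 v
  simp [hzero, hc, Quaternion.coe_mul_eq_smul]

end JNR

theorem jnr_sign_det_deriv_iota_general (N : ℕ)
    (a : Fin (N + 1) → Quaternion ℝ) (ha_im : ∀ i, (a i).re = 0)
    (lam : Fin (N + 1) → ℝ) (hlam : ∀ i, 0 < lam i)
    (μ : ℝ) (hμ : 0 < μ)
    (xs : Fin 3 → ℝ) (hxs : ∀ i, quatOfVec xs ≠ a i)
    (hzero : jnrZeta N a lam (quatOfVec xs) = 0)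
    (hnondeg : LinearMap.det
        ((jnrHess N a lam xs : (Fin 3 → ℝ) →L[ℝ] (Fin 3 → ℝ)) :
          (Fin 3 → ℝ) →ₗ[ℝ] (Fin 3 → ℝ)) ≠ 0) :
    Real.sign
        (LinearMap.det
          ((fderiv ℝ (jnrIota N a lam μ) xs : (Fin 3 → ℝ) →L[ℝ] (Fin 3 → ℝ)) :
            (Fin 3 → ℝ) →ₗ[ℝ] (Fin 3 → ℝ)))
      = -Real.sign
          (LinearMap.det
            ((jnrHess N a lam xs : (Fin 3 → ℝ) →L[ℝ] (Fin 3 → ℝ)) :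
              (Fin 3 → ℝ) →ₗ[ℝ] (Fin 3 → ℝ)))
      ∧ LinearMap.det
          ((fderiv ℝ (jnrIota N a lam μ) xs : (Fin 3 → ℝ) →L[ℝ] (Fin 3 → ℝ)) :
            (Fin 3 → ℝ) →ₗ[ℝ] (Fin 3 → ℝ)) ≠ 0 := by
  have hC : jnrPsiLeft N a lam μ (quatOfVec xs) ≠ 0 := fun h => by
    have hre := re_jnrPsiLeft_pos ha_im (re_quatOfVec xs) (fun i => (hlam i).ne') hμ
    simp [h] at hre
  have hc : 0 < ‖jnrPsiLeft N a lam μ (quatOfVec xs)‖ ^ 2 / μ :=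
    div_pos (pow_pos (norm_pos_iff.mpr hC) 2) hμ
  have hPsi := jnrPsi_eq_of_jnrZeta_eq_zero ha_im (re_quatOfVec xs) hxs hμ.ne' hzero
  have hodd : Odd (Module.finrank ℝ (Fin 3 → ℝ)) := by simp [Nat.odd_iff]
  rw [(hasFDerivAt_jnrIota ha_im hxs hμ.ne' hzero hPsi).fderiv,
    ContinuousLinearMap.toLinearMap_smul]
  exact ⟨LinearMap.sign_det_neg_smul_of_odd hodd hc _,
    LinearMap.det_neg_smul_ne_zero_of_odd hodd hc.ne' hnondeg⟩

/-- (Algebraic form of the sign theorem.) Let `N ≥ 1`, let `aᵢ` be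
distinct pure imaginary poles, `λᵢ > 0`, `μ > 0`. If `x⁎` is a non-degenerate critical
point of `f` (i.e. `ζ(x⁎) = 0` and `det Hf(x⁎) ≠ 0`), then the sign of the determinant
of the total derivative of `ι̃` at `x⁎` equals minus the sign of `det Hf(x⁎)`; in
particular the derivative of `ι̃` at `x⁎` is invertible. -/
theorem jnr_sign_det_deriv_iota (N : ℕ) (hN : 1 ≤ N)
    (a : Fin (N + 1) → Quaternion ℝ) (ha_im : ∀ i, (a i).re = 0)
    (ha : Function.Injective a)
    (lam : Fin (N + 1) → ℝ) (hlam : ∀ i, 0 < lam i)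
    (μ : ℝ) (hμ : 0 < μ)
    (xs : Fin 3 → ℝ) (hxs : ∀ i, quatOfVec xs ≠ a i)
    (hzero : jnrZeta N a lam (quatOfVec xs) = 0)
    (hnondeg : LinearMap.det
        ((jnrHess N a lam xs : (Fin 3 → ℝ) →L[ℝ] (Fin 3 → ℝ)) :
          (Fin 3 → ℝ) →ₗ[ℝ] (Fin 3 → ℝ)) ≠ 0) :
    Real.sign
        (LinearMap.det
          ((fderiv ℝ (jnrIota N a lam μ) xs : (Fin 3 → ℝ) →L[ℝ] (Fin 3 → ℝ)) :
            (Fin 3 → ℝ) →ₗ[ℝ] (Fin 3 → ℝ)))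
      = -Real.sign
          (LinearMap.det
            ((jnrHess N a lam xs : (Fin 3 → ℝ) →L[ℝ] (Fin 3 → ℝ)) :
              (Fin 3 → ℝ) →ₗ[ℝ] (Fin 3 → ℝ)))
      ∧ LinearMap.det
          ((fderiv ℝ (jnrIota N a lam μ) xs : (Fin 3 → ℝ) →L[ℝ] (Fin 3 → ℝ)) :
            (Fin 3 → ℝ) →ₗ[ℝ] (Fin 3 → ℝ)) ≠ 0 :=
  jnr_sign_det_deriv_iota_general N a ha_im lam hlam μ hμ xs hxs hzero hnondeg
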